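/- arXiv:1507.02567 — 3 statements merged into one kernel-verified Lean document; each statement's English description precedes it below -/
import Mathlib

section
/- Let n ≥ 1, t > 0, and let f : ℂⁿ → ℂ be entire with |f(Z)| ≤ C·exp(a·‖Z‖) for all Z ∈ ℂⁿ, for some constants C, a ≥ 0. Then for every X ∈ ℂⁿ, the mean value formula ∫_{ℂⁿ} f(X + S) dγ_t(S) = f(X) holds; in particular the Gaussian integral of an entire function of exponential growth equals its value at the center. -/
/-!
Since `γ ⊗ γ` is rotation invariant for a centred Gaussian `γ` on `ℝ`, the measure `γ_t` is
invariant under `Z ↦ e^{iθ} Z`. Averaging `∫ f dγ_t` over `θ ∈ [0, 2π]` and exchanging the two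
integrals (the growth bound and Fernique's theorem make this legitimate), the inner integral
becomes the average of the entire function `λ ↦ f (λ Z)` over the unit circle, which is `f 0` by
the mean value property.
-/

open MeasureTheory ProbabilityTheory Complex

/-- The Gaussian measure on `ℂ` whose real and imaginary parts are independent
real Gaussians of mean `0` and variance `t`. -/
noncomputable def gaussC (t : ℝ) : Measure ℂ :=
  ((gaussianReal 0 t.toNNReal).prod (gaussianReal 0 t.toNNReal)).map
    (fun p => (p.1 : ℂ) + (p.2 : ℂ) * Complex.I)

/-- The Gaussian measure `γ_t` on `ℂⁿ`: the pushforward of the `2n`-fold product of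
`N(0,t)` under the coordinatewise map `(u,v) ↦ u + iv`, realized as the `n`-fold
product of complex Gaussians. -/
noncomputable def gaussCn (n : ℕ) (t : ℝ) : Measure (Fin n → ℂ) :=
  Measure.pi fun _ => gaussC t

open scoped Real

section MeanValue

variable {E F : Type*} [NormedAddCommGroup E] [NormedSpace ℂ E]
  [NormedAddCommGroup F] [NormedSpace ℂ F] [CompleteSpace F]

theorem Differentiable.intervalIntegral_exp_mul_I_smul {f : E → F} (hf : Differentiable ℂ f)
    (z : E) : ∫ θ in 0..2 * π, f (Complex.exp (↑θ * I) • z) = (2 * π : ℝ) • f 0 := by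
  have hg : Differentiable ℂ fun w : ℂ => f (w • z) :=
    hf.comp (differentiable_id.smul_const z)
  have hmean := (hg.diffContOnCl (s := Metric.ball 0 |1|)).circleAverage
  rw [Real.circleAverage_def, zero_smul] at hmean
  simp only [circleMap_zero, ofReal_one, one_mul] at hmean
  rw [← hmean, smul_inv_smul₀ (by positivity)]

variable [MeasurableSpace E] [BorelSpace E] [SecondCountableTopology E]

theorem Differentiable.integral_eq_measureReal_univ_smul_apply_zero
    {μ : Measure E} [IsFiniteMeasure μ]
    (hμ : ∀ θ : ℝ, MeasurePreserving (fun z => Complex.exp (↑θ * I) • z) μ μ)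
    {f : E → F} (hf : Differentiable ℂ f) (hfi : Integrable f μ) :
    ∫ z, f z ∂μ = μ.real Set.univ • f 0 := by
  have hemb : ∀ θ : ℝ, MeasurableEmbedding fun z : E => Complex.exp (↑θ * I) • z := fun θ =>
    (Homeomorph.smulOfNeZero _ (Complex.exp_ne_zero (↑θ * I))).measurableEmbedding
  have hint : Integrable (Function.uncurry fun (θ : ℝ) (z : E) => f (Complex.exp (↑θ * I) • z))
      ((volume.restrict (Set.uIoc 0 (2 * π))).prod μ) := by
    refine (integrable_prod_iff (hf.continuous.comp (by fun_prop)).aestronglyMeasurable).2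
      ⟨.of_forall fun θ => ((hμ θ).integrable_comp_emb (hemb θ)).2 hfi, ?_⟩
    have hnorm (θ : ℝ) : ∫ z, ‖f (Complex.exp (↑θ * I) • z)‖ ∂μ = ∫ z, ‖f z‖ ∂μ :=
      (hμ θ).integral_comp (hemb θ) (‖f ·‖)
    simp only [Function.comp_apply, hnorm, Set.uIoc_of_le Real.two_pi_pos.le]
    exact integrable_const _
  have hswap := intervalIntegral_integral_swap hint
  simp only [fun θ => (hμ θ).integral_comp (hemb θ) f, intervalIntegral.integral_const,
    hf.intervalIntegral_exp_mul_I_smul, integral_const] at hswap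
  rw [sub_zero, smul_comm] at hswap
  exact smul_right_injective F (by positivity) hswap

end MeanValue

theorem ProbabilityTheory.IsGaussian.integrable_exp_mul_norm {E : Type*} [NormedAddCommGroup E]
    [NormedSpace ℝ E] [MeasurableSpace E] [BorelSpace E] [SecondCountableTopology E]
    [CompleteSpace E] (μ : Measure E) [IsGaussian μ] (b : ℝ) :
    Integrable (fun x => Real.exp (b * ‖x‖)) μ := by
  obtain ⟨c, hc, hint⟩ := exists_integrable_exp_sq μ
  -- `b r ≤ b² / (4 c) + c r²` since `(2 c r - b)² ≥ 0`
  refine (hint.const_mul (Real.exp (b ^ 2 / (4 * c)))).mono' (by fun_prop)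
    (.of_forall fun x => ?_)
  rw [Real.norm_of_nonneg (Real.exp_pos _).le, ← Real.exp_add, Real.exp_le_exp,
    div_add' _ _ _ (by positivity), le_div_iff₀ (by positivity)]
  nlinarith [sq_nonneg (2 * c * ‖x‖ - b)]

theorem gaussC_eq_map_equivRealProdCLM_symm (t : ℝ) :
    gaussC t = ((gaussianReal 0 t.toNNReal).prod (gaussianReal 0 t.toNNReal)).map
      Complex.equivRealProdCLM.symm := by
  rw [gaussC]
  congr 1
  funext p
  exact (equivRealProdCLM_symm_apply p).symm

instance isGaussian_gaussC (t : ℝ) : IsGaussian (gaussC t) := by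
  rw [gaussC_eq_map_equivRealProdCLM_symm]
  infer_instance

theorem measurePreserving_exp_mul_I_smul_gaussC (t θ : ℝ) :
    MeasurePreserving (fun z => Complex.exp (↑θ * I) • z) (gaussC t) (gaussC t) := by
  refine ⟨by fun_prop, ?_⟩
  -- `ContinuousLinearMap.rotation θ` turns `ℝ × ℝ` clockwise
  have hrot : (fun z => Complex.exp (↑θ * I) • z) ∘ Complex.equivRealProdCLM.symm
      = Complex.equivRealProdCLM.symm ∘ ContinuousLinearMap.rotation (-θ) := by
    funext p
    apply Complex.ext <;> simp [ContinuousLinearMap.rotation_apply, Complex.exp_mul_I,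
      ← ofReal_cos, ← ofReal_sin] <;> ring
  rw [gaussC_eq_map_equivRealProdCLM_symm, Measure.map_map (by fun_prop) (by fun_prop), hrot,
    ← Measure.map_map (by fun_prop) (by fun_prop),
    IsGaussian.map_rotation_eq_self (by simp [integral_id_gaussianReal])]

instance isProbabilityMeasure_gaussCn (n : ℕ) (t : ℝ) : IsProbabilityMeasure (gaussCn n t) := by
  rw [gaussCn]
  infer_instance

theorem measurePreserving_exp_mul_I_smul_gaussCn (n : ℕ) (t θ : ℝ) :
    MeasurePreserving (fun Z => Complex.exp (↑θ * I) • Z) (gaussCn n t) (gaussCn n t) :=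
  measurePreserving_pi _ _ fun _ => measurePreserving_exp_mul_I_smul_gaussC t θ

theorem integrable_prod_exp_mul_norm_gaussCn (n : ℕ) (t b : ℝ) :
    Integrable (fun Z : Fin n → ℂ => ∏ j, Real.exp (b * ‖Z j‖)) (gaussCn n t) :=
  Integrable.fintype_prod fun _ => IsGaussian.integrable_exp_mul_norm _ b

theorem sqrt_sum_normSq_le_sum_norm {ι : Type*} (s : Finset ι) (Z : ι → ℂ) :
    √(∑ j ∈ s, normSq (Z j)) ≤ ∑ j ∈ s, ‖Z j‖ := by
  rw [Real.sqrt_le_left (Finset.sum_nonneg fun j _ => norm_nonneg _)]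
  simp_rw [normSq_eq_norm_sq]
  exact Finset.sum_sq_le_sq_sum_of_nonneg fun j _ => norm_nonneg _

theorem integrable_exp_mul_sqrt_sum_normSq_add_gaussCn {n : ℕ} (t : ℝ) {a : ℝ} (ha : 0 ≤ a)
    (X : Fin n → ℂ) :
    Integrable (fun S => Real.exp (a * √(∑ j, normSq ((X + S) j)))) (gaussCn n t) := by
  refine ((integrable_prod_exp_mul_norm_gaussCn n t a).const_mul
    (Real.exp (a * ∑ j, ‖X j‖))).mono' (by fun_prop) (.of_forall fun S => ?_)
  rw [Real.norm_of_nonneg (Real.exp_pos _).le, ← Real.exp_sum, ← Real.exp_add, Real.exp_le_exp,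
    ← Finset.mul_sum, ← mul_add, ← Finset.sum_add_distrib]
  gcongr
  refine (sqrt_sum_normSq_le_sum_norm _ _).trans (Finset.sum_le_sum fun j _ => ?_)
  exact norm_add_le (X j) (S j)

theorem gaussian_mean_value_entire_general
    (n : ℕ) (t : ℝ)
    (f : (Fin n → ℂ) → ℂ) (hf : ∀ Z, AnalyticAt ℂ f Z)
    (C a : ℝ) (ha : 0 ≤ a)
    (hgrowth : ∀ Z, ‖f Z‖ ≤
      C * Real.exp (a * Real.sqrt (∑ j, Complex.normSq (Z j))))
    (X : Fin n → ℂ) :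
    ∫ S, f (X + S) ∂(gaussCn n t) = f X := by
  have hdiff : Differentiable ℂ fun S => f (X + S) :=
    fun S => (hf (X + S)).differentiableAt.comp S (differentiableAt_id.const_add X)
  have hint : Integrable (fun S => f (X + S)) (gaussCn n t) :=
    ((integrable_exp_mul_sqrt_sum_normSq_add_gaussCn t ha X).const_mul C).mono'
      hdiff.continuous.aestronglyMeasurable (.of_forall fun S => hgrowth (X + S))
  simpa using hdiff.integral_eq_measureReal_univ_smul_apply_zero
    (measurePreserving_exp_mul_I_smul_gaussCn n t) hint

/-- Mean value formula: the Gaussian integral of an entire function on `ℂⁿ`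
of exponential growth equals its value at the center. -/
theorem gaussian_mean_value_entire
    (n : ℕ) (hn : 1 ≤ n) (t : ℝ) (ht : 0 < t)
    (f : (Fin n → ℂ) → ℂ) (hf : ∀ Z, AnalyticAt ℂ f Z)
    (C a : ℝ) (hC : 0 ≤ C) (ha : 0 ≤ a)
    (hgrowth : ∀ Z, ‖f Z‖ ≤
      C * Real.exp (a * Real.sqrt (∑ j, Complex.normSq (Z j))))
    (X : Fin n → ℂ) :
    ∫ S, f (X + S) ∂(gaussCn n t) = f X :=
  gaussian_mean_value_entire_general n t f hf C a ha hgrowth X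
end

section
/- Let n ≥ 1 and h > 0. The coherent states form a resolution of the identity in the following sense: for every Y ∈ ℝⁿ × ℝⁿ and every u ∈ ℝⁿ, (2πh)^{−n} ∫_{ℝⁿ×ℝⁿ} ⟨Ψ_{Y,h}, Ψ_{X,h}⟩ · Ψ_{X,h}(u) dX = Ψ_{Y,h}(u), where ⟨f, g⟩ = ∫_{ℝⁿ} f(u) conj(g(u)) dμ_{h/2}(u) and dX is Lebesgue measure on ℝⁿ × ℝⁿ ≅ ℝ^{2n}. -/
open MeasureTheory ProbabilityTheory Complex

/-- The Gaussian product measure on `ℝⁿ` with mean `0` and variance `t` in each coordinate. -/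
noncomputable def gaussRn (n : ℕ) (t : ℝ) : Measure (Fin n → ℝ) :=
  Measure.pi fun _ => gaussianReal 0 t.toNNReal

/-- The coherent state `Ψ_{(a,b),h} : ℝⁿ → ℂ`,
`Ψ_{(a,b),h}(u) = exp( (1/h) Σ_j (a_j + i b_j) u_j − ‖a‖²/(2h) − (i/(2h)) a·b )`. -/
noncomputable def coherent (n : ℕ) (h : ℝ) (a b : Fin n → ℝ) (u : Fin n → ℝ) : ℂ :=
  Complex.exp ((1 / (h : ℂ)) * ∑ j, ((a j : ℂ) + (b j : ℂ) * Complex.I) * (u j : ℂ)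
    - (∑ j, (a j : ℂ) ^ 2) / (2 * (h : ℂ))
    - (Complex.I / (2 * (h : ℂ))) * ∑ j, (a j : ℂ) * (b j : ℂ))

/-!
Coherent states factor over coordinates, so everything reduces to `n = 1`. There the overlap
`⟨Ψ_{(c,d)}, Ψ_{(a,b)}⟩` is a Gaussian moment generating function, equal to
`exp (-((c-a)² + (d-b)²)/(4h) + i(ad - bc)/(2h))`, and the integrand in `(a, b)` becomes the
exponential of a quadratic form whose only cross term `-i ab/(2h)` is purely imaginary. The
Gaussian integral over the plane then has determinant `4αβ + γ² = 1/h²`, which produces the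
factor `2πh`, and completing the square returns exactly the exponent of `Ψ_{(c,d)}(u)`.
-/

open Real ComplexConjugate

theorem integral_cexp_neg_mul_sq_add {β : ℝ} (hβ : 0 < β) (c d : ℂ) :
    ∫ x : ℝ, cexp (-β * x ^ 2 + c * x + d) = √(π / β) * cexp (c ^ 2 / (4 * β) + d) := by
  have hβ' : (-(β : ℂ)).re < 0 := by simpa using hβ
  rw [integral_cexp_quadratic hβ', neg_neg, ← ofReal_div,
    show (1 / 2 : ℂ) = ((1 / 2 : ℝ) : ℂ) by norm_num, ← ofReal_cpow (by positivity),
    ← sqrt_eq_rpow]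
  ring_nf

theorem integral_cexp_mul_add_gaussianReal (μ : ℝ) (v : NNReal) (z w : ℂ) :
    ∫ x, cexp (z * x + w) ∂gaussianReal μ v = cexp (z * μ + v * z ^ 2 / 2 + w) := by
  have hmgf := complexMGF_id_gaussianReal (μ := μ) (v := v) z
  simp_rw [complexMGF, id] at hmgf
  simp_rw [Complex.exp_add _ w, integral_mul_const, hmgf]

theorem integrable_cexp_quadratic_prod {α β : ℝ} (hα : 0 < α) (hβ : 0 < β) (γ : ℝ) (p q r : ℂ) :
    Integrable fun x : ℝ × ℝ =>
      cexp (-α * x.1 ^ 2 - β * x.2 ^ 2 + γ * I * x.1 * x.2 + p * x.1 + q * x.2 + r) := by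
  have h₁ := integrable_cexp_quadratic' (b := -α) (by simpa using hα) p r
  have h₂ := integrable_cexp_quadratic' (b := -β) (by simpa using hβ) q 0
  refine (h₁.norm.mul_prod h₂.norm).mono' (by fun_prop) (Filter.Eventually.of_forall fun x => ?_)
  -- the cross term `γ i x₁ x₂` has modulus one
  have hsplit : cexp (-α * x.1 ^ 2 - β * x.2 ^ 2 + γ * I * x.1 * x.2 + p * x.1 + q * x.2 + r)
      = cexp (-α * x.1 ^ 2 + p * x.1 + r) * cexp (-β * x.2 ^ 2 + q * x.2 + 0)
        * cexp ((γ * x.1 * x.2 : ℝ) * I) := by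
    rw [← Complex.exp_add, ← Complex.exp_add]
    push_cast
    ring_nf
  rw [hsplit, norm_mul, norm_mul, norm_exp_ofReal_mul_I, mul_one]

theorem integral_cexp_quadratic_prod {α β : ℝ} (hα : 0 < α) (hβ : 0 < β) (γ : ℝ) (p q r : ℂ) :
    ∫ x : ℝ × ℝ, cexp (-α * x.1 ^ 2 - β * x.2 ^ 2 + γ * I * x.1 * x.2 + p * x.1 + q * x.2 + r)
      = (2 * π / √(4 * α * β + γ ^ 2) : ℝ)
        * cexp ((β * p ^ 2 + γ * I * p * q + α * q ^ 2) / (4 * α * β + γ ^ 2) + r) := by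
  set δ : ℝ := (4 * α * β + γ ^ 2) / (4 * β) with hδ
  have hD : 0 < 4 * α * β + γ ^ 2 := by positivity
  have hδpos : 0 < δ := by positivity
  have hβc : (β : ℂ) ≠ 0 := ofReal_ne_zero.mpr hβ.ne'
  have hinner : ∀ a : ℝ,
      ∫ b : ℝ, cexp (-α * a ^ 2 - β * b ^ 2 + γ * I * a * b + p * a + q * b + r)
        = √(π / β) * cexp (-δ * a ^ 2 + (p + γ * I * q / (2 * β)) * a + (q ^ 2 / (4 * β) + r)) := by
    intro a
    have hquad : (fun b : ℝ => cexp (-α * a ^ 2 - β * b ^ 2 + γ * I * a * b + p * a + q * b + r))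
        = fun b : ℝ => cexp (-β * b ^ 2 + (q + γ * I * a) * b + (-α * a ^ 2 + p * a + r)) := by
      funext b; ring_nf
    rw [hquad, integral_cexp_neg_mul_sq_add hβ]
    congr 2
    rw [hδ]; push_cast
    field_simp
    ring_nf; rw [I_sq]; ring
  rw [Measure.volume_eq_prod, integral_prod _ (integrable_cexp_quadratic_prod hα hβ γ p q r)]
  simp_rw [hinner]
  rw [integral_const_mul, integral_cexp_neg_mul_sq_add hδpos, ← mul_assoc, ← ofReal_mul,
    ← Real.sqrt_mul (by positivity)]
  congr 2
  · rw [show π / β * (π / δ) = (2 * π) ^ 2 / (4 * α * β + γ ^ 2) by rw [hδ]; field_simp; ring,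
      Real.sqrt_div' _ hD.le, Real.sqrt_sq (by positivity)]
  · rw [hδ]; push_cast
    -- `field_simp` normalises the determinant to this form before looking for its nonvanishing
    have hDc : (β * 4 * α + γ ^ 2 : ℂ) ≠ 0 := by
      exact_mod_cast (by positivity : β * 4 * α + γ ^ 2 ≠ 0)
    field_simp
    ring_nf; rw [I_sq]; ring

noncomputable def coherent₁ (h a b x : ℝ) : ℂ :=
  cexp (((a + b * I) * x - a ^ 2 / 2 - I * a * b / 2) / h)

theorem coherent_eq_prod (n : ℕ) (h : ℝ) (a b u : Fin n → ℝ) :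
    coherent n h a b u = ∏ j, coherent₁ h (a j) (b j) (u j) := by
  simp only [coherent, coherent₁, ← Complex.exp_sum]
  congr 1
  simp only [Finset.mul_sum, Finset.sum_div, ← Finset.sum_sub_distrib]
  exact Finset.sum_congr rfl fun j _ => by ring

theorem integral_coherent₁_mul_conj {h : ℝ} (hh : 0 < h) (a b c d : ℝ) :
    ∫ x, coherent₁ h c d x * conj (coherent₁ h a b x) ∂gaussianReal 0 (h / 2).toNNReal
      = cexp ((-((c - a) ^ 2 + (d - b) ^ 2) + 2 * I * (a * d - b * c)) / (4 * h)) := by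
  have hhc : (h : ℂ) ≠ 0 := ofReal_ne_zero.mpr hh.ne'
  have hlin : ∀ x : ℝ, coherent₁ h c d x * conj (coherent₁ h a b x)
      = cexp ((c + a + (d - b) * I) / h * x
          - ((c ^ 2 + a ^ 2) + I * (c * d - a * b)) / (2 * h)) := by
    intro x
    simp only [coherent₁, ← Complex.exp_conj, ← Complex.exp_add, map_div₀, map_sub, map_mul,
      map_add, map_pow, conj_ofReal, conj_I, map_ofNat]
    congr 1; ring
  simp_rw [hlin, sub_eq_add_neg _ (_ / _), integral_cexp_mul_add_gaussianReal,
    Real.coe_toNNReal _ (by positivity : 0 ≤ h / 2)]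
  congr 1
  push_cast
  field_simp
  ring_nf; rw [I_sq]; ring

theorem coherent₁_resolution_of_identity {h : ℝ} (hh : 0 < h) (c d u : ℝ) :
    ∫ X : ℝ × ℝ, (∫ x, coherent₁ h c d x * conj (coherent₁ h X.1 X.2 x)
        ∂gaussianReal 0 (h / 2).toNNReal) * coherent₁ h X.1 X.2 u
      = (2 * π * h : ℝ) * coherent₁ h c d u := by
  have hhc : (h : ℂ) ≠ 0 := ofReal_ne_zero.mpr hh.ne'
  have hquad : ∀ X : ℝ × ℝ,
      cexp ((-((c - X.1) ^ 2 + (d - X.2) ^ 2) + 2 * I * (X.1 * d - X.2 * c)) / (4 * h))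
        * coherent₁ h X.1 X.2 u
      = cexp (-(3 / (4 * h) : ℝ) * X.1 ^ 2 - (1 / (4 * h) : ℝ) * X.2 ^ 2
          + (-1 / (2 * h) : ℝ) * I * X.1 * X.2 + (c + d * I + 2 * u) / (2 * h) * X.1
          + (d - c * I + 2 * u * I) / (2 * h) * X.2 - (c ^ 2 + d ^ 2) / (4 * h)) := by
    intro X
    rw [coherent₁, ← Complex.exp_add]
    congr 1
    push_cast
    field_simp
    ring
  simp_rw [integral_coherent₁_mul_conj hh, hquad, sub_eq_add_neg _ ((c ^ 2 + d ^ 2 : ℂ) / _)]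
  rw [integral_cexp_quadratic_prod (by positivity) (by positivity)]
  have hdet : 4 * (3 / (4 * h)) * (1 / (4 * h)) + (-1 / (2 * h)) ^ 2 = (1 / h) ^ 2 := by
    field_simp; ring
  rw [hdet, Real.sqrt_sq (by positivity), coherent₁]
  congr 1
  · push_cast; field_simp
  · congr 1
    push_cast
    field_simp
    ring_nf; rw [I_sq, I_pow_three]; ring

theorem integral_coherent_mul_conj_eq_prod (n : ℕ) (h : ℝ) (a b c d : Fin n → ℝ) :
    ∫ x, coherent n h c d x * conj (coherent n h a b x) ∂gaussRn n (h / 2)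
      = ∏ j, ∫ x, coherent₁ h (c j) (d j) x * conj (coherent₁ h (a j) (b j) x)
          ∂gaussianReal 0 (h / 2).toNNReal := by
  simp_rw [coherent_eq_prod, map_prod, ← Finset.prod_mul_distrib]
  exact integral_fintype_prod_eq_prod fun j x =>
    coherent₁ h (c j) (d j) x * conj (coherent₁ h (a j) (b j) x)

theorem integral_prod_pi_eq_prod {ι α β 𝕜 : Type*} [Fintype ι] [RCLike 𝕜]
    [MeasureSpace α] [MeasureSpace β] [SigmaFinite (volume : Measure α)]
    [SigmaFinite (volume : Measure β)] (f : ι → α × β → 𝕜) :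
    ∫ X : (ι → α) × (ι → β), ∏ j, f j (X.1 j, X.2 j) = ∏ j, ∫ p, f j p := by
  rw [← (volume_measurePreserving_arrowProdEquivProdArrow α β ι).integral_comp']
  exact integral_fintype_prod_volume_eq_prod f

theorem coherent_resolution_of_identity_general
    (n : ℕ) (h : ℝ) (hh : 0 < h)
    (Y : (Fin n → ℝ) × (Fin n → ℝ)) (u : Fin n → ℝ) :
    (((2 * Real.pi * h) ^ n : ℝ) : ℂ)⁻¹ *
      ∫ X : (Fin n → ℝ) × (Fin n → ℝ),
        (∫ u', coherent n h Y.1 Y.2 u' * (starRingEnd ℂ) (coherent n h X.1 X.2 u')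
            ∂(gaussRn n (h / 2)))
          * coherent n h X.1 X.2 u
      = coherent n h Y.1 Y.2 u := by
  have hfactor : ∀ X : (Fin n → ℝ) × (Fin n → ℝ),
      (∫ u', coherent n h Y.1 Y.2 u' * conj (coherent n h X.1 X.2 u') ∂gaussRn n (h / 2))
          * coherent n h X.1 X.2 u
        = ∏ j, (∫ x, coherent₁ h (Y.1 j) (Y.2 j) x * conj (coherent₁ h (X.1 j) (X.2 j) x)
            ∂gaussianReal 0 (h / 2).toNNReal) * coherent₁ h (X.1 j) (X.2 j) (u j) := by
    intro X
    rw [integral_coherent_mul_conj_eq_prod, coherent_eq_prod, Finset.prod_mul_distrib]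
  simp_rw [hfactor]
  rw [integral_prod_pi_eq_prod (fun j (X : ℝ × ℝ) =>
      (∫ x, coherent₁ h (Y.1 j) (Y.2 j) x * conj (coherent₁ h X.1 X.2 x)
        ∂gaussianReal 0 (h / 2).toNNReal) * coherent₁ h X.1 X.2 (u j))]
  simp_rw [coherent₁_resolution_of_identity hh, Finset.prod_mul_distrib,
    Finset.prod_const, Finset.card_univ, Fintype.card_fin, ← coherent_eq_prod, ofReal_pow]
  rw [← mul_assoc, inv_mul_cancel₀ (pow_ne_zero _ (ofReal_ne_zero.mpr (by positivity))), one_mul]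

/-- Resolution of the identity by coherent states:
`(2πh)^{−n} ∫_{ℝ²ⁿ} ⟨Ψ_{Y,h}, Ψ_{X,h}⟩ · Ψ_{X,h}(u) dX = Ψ_{Y,h}(u)`,
where `⟨f,g⟩ = ∫ f conj(g) dμ_{h/2}` and `dX` is Lebesgue measure on `ℝⁿ × ℝⁿ`. -/
theorem coherent_resolution_of_identity
    (n : ℕ) (hn : 1 ≤ n) (h : ℝ) (hh : 0 < h)
    (Y : (Fin n → ℝ) × (Fin n → ℝ)) (u : Fin n → ℝ) :
    (((2 * Real.pi * h) ^ n : ℝ) : ℂ)⁻¹ *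
      ∫ X : (Fin n → ℝ) × (Fin n → ℝ),
        (∫ u', coherent n h Y.1 Y.2 u' * (starRingEnd ℂ) (coherent n h X.1 X.2 u')
            ∂(gaussRn n (h / 2)))
          * coherent n h X.1 X.2 u
      = coherent n h Y.1 Y.2 u :=
  coherent_resolution_of_identity_general n h hh Y u
end

section
/- Let n ≥ 1, h > 0 and A, B ∈ ℂⁿ. Define Ψ : ℂⁿ → ℂ by Ψ(Z) = exp( (1/h)( −Σ_j Z_j conj(Z_j) + Σ_j A_j Z_j + Σ_j B_j conj(Z_j) ) ). Then the heat operator of variance h/2 acts on Ψ by: for every Z ∈ ℂⁿ, ∫_{ℂⁿ} Ψ(Z + W) dγ_{h/2}(W) = 2^{−n} exp( (1/(2h))( −Σ_j Z_j conj(Z_j) + Σ_j A_j Z_j + Σ_j B_j conj(Z_j) + Σ_j A_j B_j ) ). -/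
open MeasureTheory ProbabilityTheory Complex

open scoped NNReal ENNReal

lemma gint (t : ℝ) (ht : 0 < t) (b c : ℂ) (hb : (b - 1/(2*(t:ℂ))).re < 0) :
    ∫ u : ℝ, Complex.exp (b*u^2 + c*u) ∂(gaussianReal 0 t.toNNReal)
      = ((Real.sqrt (2*Real.pi*t) : ℝ) : ℂ)⁻¹ * (((Real.pi : ℂ) / -(b - 1/(2*(t:ℂ)))) ^ (1/2:ℂ)
          * Complex.exp (- c^2 / (4 * (b - 1/(2*(t:ℂ)))))) := by
  have hv : (t.toNNReal : ℝ≥0) ≠ 0 := by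
    simp only [ne_eq, Real.toNNReal_eq_zero, not_le]; exact ht
  have hct : ((t.toNNReal : ℝ≥0) : ℝ) = t := Real.coe_toNNReal t ht.le
  rw [gaussianReal_of_var_ne_zero 0 hv]
  have hgd : gaussianPDF 0 t.toNNReal
      = fun x => ((Real.toNNReal (gaussianPDFReal 0 t.toNNReal x) : ℝ≥0) : ℝ≥0∞) := rfl
  rw [hgd, integral_withDensity_eq_integral_smul
    ((measurable_gaussianPDFReal 0 t.toNNReal).real_toNNReal)]
  have hpdf : ∀ u : ℝ, (Real.toNNReal (gaussianPDFReal 0 t.toNNReal u) : ℝ≥0)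
        • Complex.exp (b*u^2 + c*u)
      = ((Real.sqrt (2*Real.pi*t) : ℝ) : ℂ)⁻¹
        * Complex.exp ((b - 1/(2*(t:ℂ)))*u^2 + c*u + 0) := by
    intro u
    rw [NNReal.smul_def, Real.coe_toNNReal _ (gaussianPDFReal_nonneg 0 t.toNNReal u)]
    rw [gaussianPDFReal, hct]
    rw [Complex.real_smul]
    push_cast
    rw [mul_assoc, ← Complex.exp_add]
    congr 2
    have htC : (t:ℂ) ≠ 0 := by exact_mod_cast ht.ne'
    field_simp
    ring
  simp_rw [hpdf]
  rw [integral_const_mul, integral_cexp_quadratic hb c 0]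
  rw [zero_sub]
  congr 2
  ring

lemma key1 (h : ℝ) (hh : 0 < h) (a b z : ℂ) :
    ∫ w, Complex.exp ((1/(h:ℂ)) * (-((z+w) * (starRingEnd ℂ) (z+w)) + a*(z+w)
        + b*(starRingEnd ℂ) (z+w))) ∂(gaussC (h/2))
      = (1/2 : ℂ) * Complex.exp ((1/(2*(h:ℂ)))
          * (-(z * (starRingEnd ℂ) z) + a*z + b*(starRingEnd ℂ) z + a*b)) := by
  have hC : (h:ℂ) ≠ 0 := by exact_mod_cast hh.ne'
  have hφ : Measurable (fun p : ℝ × ℝ => (p.1 : ℂ) + (p.2 : ℂ) * Complex.I) := by fun_prop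
  have hconj : Continuous (fun w : ℂ => (starRingEnd ℂ) (z + w)) :=
    Complex.continuous_conj.comp (continuous_const.add continuous_id)
  have hFc : Continuous (fun w : ℂ => Complex.exp ((1/(h:ℂ)) * (-((z+w) * (starRingEnd ℂ) (z+w))
      + a*(z+w) + b*(starRingEnd ℂ) (z+w)))) := by
    apply Continuous.cexp
    apply Continuous.mul continuous_const
    exact (((continuous_const.add continuous_id).mul hconj).neg.add
      (continuous_const.mul (continuous_const.add continuous_id))).add
      (continuous_const.mul hconj)
  rw [gaussC, integral_map hφ.aemeasurable hFc.aestronglyMeasurable]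
  have hrw : ∀ p : ℝ × ℝ, Complex.exp ((1/(h:ℂ)) * (-((z+((p.1:ℂ)+(p.2:ℂ)*Complex.I))
        * (starRingEnd ℂ) (z+((p.1:ℂ)+(p.2:ℂ)*Complex.I)))
        + a*(z+((p.1:ℂ)+(p.2:ℂ)*Complex.I))
        + b*(starRingEnd ℂ) (z+((p.1:ℂ)+(p.2:ℂ)*Complex.I))))
      = Complex.exp ((1/(h:ℂ)) * (-(z * (starRingEnd ℂ) z) + a*z + b*(starRingEnd ℂ) z))
        * (Complex.exp ((-(1/(h:ℂ)))*(p.1:ℂ)^2 + ((a+b-z-(starRingEnd ℂ) z)/h)*(p.1:ℂ))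
          * Complex.exp ((-(1/(h:ℂ)))*(p.2:ℂ)^2
            + ((Complex.I*(a-b+z-(starRingEnd ℂ) z))/h)*(p.2:ℂ))) := by
    intro p
    rw [← Complex.exp_add, ← Complex.exp_add]
    congr 1
    simp only [map_add, map_mul, Complex.conj_ofReal, Complex.conj_I]
    field_simp
    ring_nf
    rw [Complex.I_sq]
    ring
  simp_rw [hrw]
  rw [integral_const_mul,
    integral_prod_mul
      (fun u : ℝ => Complex.exp ((-(1/(h:ℂ)))*(u:ℂ)^2 + ((a+b-z-(starRingEnd ℂ) z)/h)*(u:ℂ)))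
      (fun v : ℝ => Complex.exp ((-(1/(h:ℂ)))*(v:ℂ)^2
        + ((Complex.I*(a-b+z-(starRingEnd ℂ) z))/h)*(v:ℂ)))]
  have hb0 : ((-(1/(h:ℂ))) - 1/(2*(((h/2:ℝ)):ℂ))).re < 0 := by
    have : ((-(1/(h:ℂ))) - 1/(2*(((h/2:ℝ)):ℂ))) = ((-2/h : ℝ) : ℂ) := by
      push_cast; field_simp; ring
    rw [this, Complex.ofReal_re, neg_div]
    have h2 : (0:ℝ) < 2/h := by positivity
    linarith
  rw [gint (h/2) (by positivity) _ _ hb0, gint (h/2) (by positivity) _ _ hb0]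
  have hsimp : ((-(1/(h:ℂ))) - 1/(2*(((h/2:ℝ)):ℂ))) = -(2/(h:ℂ)) := by
    push_cast; field_simp; ring
  rw [hsimp]
  have hpow : ((Real.pi : ℂ) / -(-(2/(h:ℂ)))) ^ (1/2:ℂ)
      = ((Real.sqrt (Real.pi*h/2) : ℝ) : ℂ) := by
    have h1 : ((Real.pi : ℂ) / -(-(2/(h:ℂ)))) = ((Real.pi*h/2 : ℝ) : ℂ) := by
      push_cast; field_simp
    rw [h1, show ((1/2 : ℂ)) = (((1/2:ℝ)):ℂ) by norm_num,
      ← Complex.ofReal_cpow (by positivity)]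
    norm_num [Real.sqrt_eq_rpow]
  rw [hpow]
  have hsq : (((Real.sqrt (2*Real.pi*(h/2)) : ℝ) : ℂ))⁻¹ * ((Real.sqrt (Real.pi*h/2) : ℝ) : ℂ)
      = ((Real.sqrt 2 : ℝ):ℂ)⁻¹ := by
    have h2 : 2*Real.pi*(h/2) = Real.pi*h := by ring
    have hr : (Real.sqrt (Real.pi*h))⁻¹ * Real.sqrt (Real.pi*h/2) = (Real.sqrt 2)⁻¹ := by
      rw [Real.sqrt_div (by positivity) 2]
      have h4 : Real.sqrt (Real.pi*h) ≠ 0 := by positivity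
      field_simp
    rw [h2]
    exact_mod_cast hr
  have hmerge : ∀ (p s x y c' : ℂ), Complex.exp c' * (p*(s*Complex.exp x) * (p*(s*Complex.exp y)))
      = ((p*s)*(p*s)) * Complex.exp (c'+x+y) := by
    intro p s x y c'
    rw [Complex.exp_add, Complex.exp_add]
    ring
  rw [hmerge, hsq]
  have h12 : (((Real.sqrt 2 : ℝ):ℂ))⁻¹ * (((Real.sqrt 2 : ℝ):ℂ))⁻¹ = 1/2 := by
    have hr2 : (Real.sqrt 2)⁻¹ * (Real.sqrt 2)⁻¹ = 1/2 := by
      rw [← mul_inv, Real.mul_self_sqrt (by norm_num)]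
      norm_num
    rw [← Complex.ofReal_inv, ← Complex.ofReal_mul, hr2]
    norm_num
  rw [h12]
  congr 1
  rw [show (Complex.I*(a-b+z-(starRingEnd ℂ) z)/(h:ℂ))^2
      = -((a-b+z-(starRingEnd ℂ) z)^2)/((h:ℂ))^2 from by
    rw [mul_div_assoc, mul_pow, Complex.I_sq]; ring]
  congr 1
  field_simp
  ring_nf

/-- Action of the heat operator of variance `h/2` on the Gaussian
`Ψ(Z) = exp((1/h)(−Σ Z_j conj Z_j + Σ A_j Z_j + Σ B_j conj Z_j))`:
`∫ Ψ(Z+W) dγ_{h/2}(W) = 2^{−n} exp((1/(2h))(−Σ Z_j conj Z_j + Σ A_j Z_j + Σ B_j conj Z_j + Σ A_j B_j))`. -/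
theorem heat_on_gaussian
    (n : ℕ) (hn : 1 ≤ n) (h : ℝ) (hh : 0 < h) (A B : Fin n → ℂ)
    (Ψ : (Fin n → ℂ) → ℂ)
    (hΨ : ∀ Z, Ψ Z = Complex.exp ((1 / (h : ℂ)) *
      (-∑ j, Z j * (starRingEnd ℂ) (Z j) + ∑ j, A j * Z j
        + ∑ j, B j * (starRingEnd ℂ) (Z j))))
    (Z : Fin n → ℂ) :
    ∫ W, Ψ (Z + W) ∂(gaussCn n (h / 2))
      = (2 : ℂ) ^ (-(n : ℤ)) * Complex.exp ((1 / (2 * (h : ℂ))) *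
          (-∑ j, Z j * (starRingEnd ℂ) (Z j) + ∑ j, A j * Z j
            + ∑ j, B j * (starRingEnd ℂ) (Z j) + ∑ j, A j * B j)) := by

  have hφ : Measurable (fun p : ℝ × ℝ => (p.1 : ℂ) + (p.2 : ℂ) * Complex.I) := by fun_prop
  haveI hP : IsProbabilityMeasure (gaussC (h/2)) := by
    unfold gaussC
    exact Measure.isProbabilityMeasure_map hφ.aemeasurable
  letI : MeasureSpace ℂ := ⟨gaussC (h/2)⟩
  haveI : SigmaFinite (volume : Measure ℂ) := by
    change SigmaFinite (gaussC (h/2)); infer_instance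
  have hprod : ∀ W : Fin n → ℂ, Ψ (Z + W) = ∏ j, (fun w : ℂ =>
      Complex.exp ((1/(h:ℂ)) * (-((Z j + w) * (starRingEnd ℂ) (Z j + w))
        + A j * (Z j + w) + B j * (starRingEnd ℂ) (Z j + w)))) (W j) := by
    intro W
    rw [hΨ, ← Complex.exp_sum]
    congr 1
    simp only [Pi.add_apply]
    rw [← Finset.sum_neg_distrib, ← Finset.sum_add_distrib, ← Finset.sum_add_distrib,
      Finset.mul_sum]
  simp_rw [hprod]
  have hvol : gaussCn n (h/2) = (volume : Measure (Fin n → ℂ)) := rfl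
  rw [hvol]
  have hfub : (∫ W : Fin n → ℂ, ∏ j, Complex.exp ((1/(h:ℂ))
        * (-((Z j + W j) * (starRingEnd ℂ) (Z j + W j))
          + A j * (Z j + W j) + B j * (starRingEnd ℂ) (Z j + W j))))
      = ∏ j, ∫ w : ℂ, Complex.exp ((1/(h:ℂ))
        * (-((Z j + w) * (starRingEnd ℂ) (Z j + w))
          + A j * (Z j + w) + B j * (starRingEnd ℂ) (Z j + w))) :=
    MeasureTheory.integral_fin_nat_prod_eq_prod (fun j (w : ℂ) => Complex.exp ((1/(h:ℂ))
        * (-((Z j + w) * (starRingEnd ℂ) (Z j + w))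
          + A j * (Z j + w) + B j * (starRingEnd ℂ) (Z j + w))))
  rw [hfub]
  have hkey : ∀ j : Fin n, (∫ w : ℂ, Complex.exp ((1/(h:ℂ))
        * (-((Z j + w) * (starRingEnd ℂ) (Z j + w))
          + A j * (Z j + w) + B j * (starRingEnd ℂ) (Z j + w))))
      = (1/2 : ℂ) * Complex.exp ((1/(2*(h:ℂ)))
          * (-(Z j * (starRingEnd ℂ) (Z j)) + A j * Z j
            + B j * (starRingEnd ℂ) (Z j) + A j * B j)) := by
    intro j
    exact key1 h hh (A j) (B j) (Z j)
  rw [Finset.prod_congr rfl (fun j _ => hkey j)]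
  rw [Finset.prod_mul_distrib, Finset.prod_const, ← Complex.exp_sum]
  congr 1
  · rw [zpow_neg, zpow_natCast]
    rw [one_div, inv_pow]
    simp
  · rw [← Finset.sum_neg_distrib, ← Finset.sum_add_distrib, ← Finset.sum_add_distrib,
      ← Finset.sum_add_distrib, Finset.mul_sum]
end
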